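/- arXiv:2304.14199 — 4 statements merged into one kernel-verified Lean document; each statement's English description precedes it below -/
import Mathlib

section
/- Let V(K') be the 3×3 matrix whose first two rows are formed by the column vectors k'₄ − k'₁, k'₅ − k'₂, k'₆ − k'₃ ∈ ℝ², and whose third row is (det(k'₁, k'₄ − k'₁), det(k'₂, k'₅ − k'₂), det(k'₃, k'₆ − k'₃)), where det(a,b) denotes the 2×2 determinant of the matrix with columns a and b. Then under any regular affine transformation k'_i ↦ A k'_i + a (A a regular 2×2 matrix, a ∈ ℝ²) applied to all six points, det V is transformed to (det A)² · det V. -/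
/-- The 2×2 determinant of the matrix with columns `a`, `b`. -/
def det2 (a b : Fin 2 → ℝ) : ℝ := a 0 * b 1 - a 1 * b 0

/-- The matrix `V(K')` whose columns are the Plücker coordinates of the three legs. -/
def Vmat (K : Fin 6 → Fin 2 → ℝ) : Matrix (Fin 3) (Fin 3) ℝ :=
  Matrix.of fun r c =>
    let i : Fin 6 := Fin.castLE (by norm_num) c
    let j : Fin 6 := c.addNat 3
    if r = 0 then (K j - K i) 0
    else if r = 1 then (K j - K i) 1
    else det2 (K i) (K j - K i)

set_option maxHeartbeats 2000000 in
/-- Under a regular affine transformation `k'ᵢ ↦ A k'ᵢ + a`, the singularity polynomial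
`det V` is transformed to `(det A)² · det V`. -/
theorem Vdet_affine_transform (A : Matrix (Fin 2) (Fin 2) ℝ) (hA : A.det ≠ 0)
    (a : Fin 2 → ℝ) (K : Fin 6 → Fin 2 → ℝ) :
    (Vmat (fun i => A.mulVec (K i) + a)).det = A.det ^ 2 * (Vmat K).det := by
  simp only [Vmat, Matrix.det_fin_three, Matrix.of_apply, det2, Matrix.mulVec,
    Matrix.det_fin_two, Pi.add_apply, Pi.sub_apply, dotProduct, Fin.sum_univ_two]
  norm_num [Fin.castLE, Fin.addNat, Fin.ext_iff]
  ring
end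

section
/- If in a configuration K' of a 3-RPR manipulator the three legs are collinear, i.e., all six points k'₁,…,k'₆ lie on a common line of ℝ², then K' is a singular point of the singularity variety V = 0: the polynomial V and all twelve of its first partial derivatives with respect to the coordinates of k'₁,…,k'₆ vanish at K'. -/
/-- The singularity polynomial `V` as a function of the configuration. -/
def Vdet (K : Fin 6 → Fin 2 → ℝ) : ℝ := (Vmat K).det

/-- The determinant of a 3×3 real matrix, as a continuous multilinear map in the rows. -/
noncomputable def detCM : ContinuousMultilinearMap ℝ (fun _ : Fin 3 => (Fin 3 → ℝ)) ℝ :=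
  MultilinearMap.mkContinuous
    (Matrix.detRowAlternating (n := Fin 3) (R := ℝ)).toMultilinearMap 6 (by
      intro m
      have h : ∀ i j : Fin 3, |m i j| ≤ ‖m i‖ := fun i j => by
        simpa using norm_le_pi_norm (m i) j
      have key : ∀ a b c : Fin 3, |m 0 a * m 1 b * m 2 c| ≤ ‖m 0‖ * ‖m 1‖ * ‖m 2‖ := by
        intro a b c
        rw [abs_mul, abs_mul]
        exact mul_le_mul (mul_le_mul (h 0 a) (h 1 b) (abs_nonneg _) (norm_nonneg _))
          (h 2 c) (abs_nonneg _) (by positivity)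
      have e : (Matrix.detRowAlternating (n := Fin 3) (R := ℝ)).toMultilinearMap m
          = Matrix.det (Matrix.of m) := rfl
      rw [Real.norm_eq_abs, e, Matrix.det_fin_three, Fin.prod_univ_three]
      have k1 := abs_le.mp (key 0 1 2)
      have k2 := abs_le.mp (key 0 2 1)
      have k3 := abs_le.mp (key 1 0 2)
      have k4 := abs_le.mp (key 1 2 0)
      have k5 := abs_le.mp (key 2 0 1)
      have k6 := abs_le.mp (key 2 1 0)
      rw [abs_le]
      constructor <;> simp only [Matrix.of_apply] <;> nlinarith [k1.1, k1.2, k2.1, k2.2,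
        k3.1, k3.2, k4.1, k4.2, k5.1, k5.2, k6.1, k6.2])

lemma detCM_apply (m : Fin 3 → Fin 3 → ℝ) : detCM m = Matrix.det (Matrix.of m) := rfl

lemma detCM_linearDeriv_zero (w s : Fin 3 → ℝ) :
    detCM.linearDeriv (fun r => w r • s) = 0 := by
  ext y
  rw [ContinuousMultilinearMap.linearDeriv_apply]
  simp only [ContinuousLinearMap.zero_apply]
  refine Finset.sum_eq_zero fun i _ => ?_
  fin_cases i <;>
  · rw [detCM_apply, Matrix.det_fin_three]
    simp only [Matrix.of_apply, Function.update_apply, Pi.smul_apply, smul_eq_mul, Fin.ext_iff]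
    norm_num
    ring

/-- If all six anchor points lie on a common line, then the configuration is a singular
point of the singularity variety `V = 0`. -/
theorem collinear_legs_singular_point (K : Fin 6 → Fin 2 → ℝ)
    (h : ∃ p v : Fin 2 → ℝ, ∀ i : Fin 6, ∃ t : ℝ, K i = p + t • v) :
    Vdet K = 0 ∧ fderiv ℝ Vdet K = 0 := by
  obtain ⟨p, v, ht⟩ := h
  choose t ht using ht
  set w : Fin 3 → ℝ := ![v 0, v 1, det2 p v] with hw
  set s3 : Fin 3 → ℝ := fun c => t (c.addNat 3) - t (Fin.castLE (by norm_num) c) with hs3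
  have hK : ∀ i : Fin 6, ∀ j : Fin 2, K i j = p j + t i * v j := by
    intro i j; rw [ht i]; simp
  have hrows : (fun r => Vmat K r) = fun r => w r • s3 := by
    funext r c
    fin_cases r
    · simp only [Vmat, Matrix.of_apply, det2, Pi.sub_apply, Pi.smul_apply, smul_eq_mul,
        hw, hs3, Matrix.cons_val_zero, Matrix.cons_val_one, Matrix.head_cons]
      norm_num [hK]
      ring
    · simp only [Vmat, Matrix.of_apply, det2, Pi.sub_apply, Pi.smul_apply, smul_eq_mul,
        hw, hs3, Matrix.cons_val_zero, Matrix.cons_val_one, Matrix.head_cons]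
      norm_num [hK]
      ring
    · simp only [Vmat, Matrix.of_apply]
      rw [if_neg (by decide), if_neg (by decide)]
      simp only [det2, Pi.sub_apply, Pi.smul_apply, smul_eq_mul, hw, hs3]
      norm_num [hK]
      ring
  have hVdetK : Vdet K = 0 := by
    have : Vdet K = detCM (fun r c => Vmat K r c) := rfl
    rw [show (fun r c => Vmat K r c) = (fun r => Vmat K r) from rfl] at this
    rw [this, hrows, detCM_apply, Matrix.det_fin_three]
    simp only [Matrix.of_apply, Pi.smul_apply, smul_eq_mul]
    ring
  refine ⟨hVdetK, ?_⟩
  -- differentiability of the entries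
  have hcoord : ∀ (i : Fin 6) (j : Fin 2),
      DifferentiableAt ℝ (fun K' : Fin 6 → Fin 2 → ℝ => K' i j) K := by
    intro i j
    exact ((ContinuousLinearMap.proj j).comp
      (ContinuousLinearMap.proj (R := ℝ) (φ := fun _ : Fin 6 => (Fin 2 → ℝ)) i)).differentiableAt
  have hg : DifferentiableAt ℝ
      (fun K' : Fin 6 → Fin 2 → ℝ => fun r c : Fin 3 => Vmat K' r c) K := by
    rw [differentiableAt_pi]
    intro r
    rw [differentiableAt_pi]
    intro c
    fin_cases r <;>
    · simp only [Vmat, Matrix.of_apply, det2, Pi.sub_apply, Fin.ext_iff]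
      norm_num
      fun_prop
  have hf : HasFDerivAt (⇑detCM) (0 : (Fin 3 → Fin 3 → ℝ) →L[ℝ] ℝ)
      (fun r c : Fin 3 => Vmat K r c) := by
    have := detCM.hasFDerivAt (x := fun r c : Fin 3 => Vmat K r c)
    rw [show (fun r c : Fin 3 => Vmat K r c) = (fun r => Vmat K r) from rfl] at this
    rwa [hrows, detCM_linearDeriv_zero, ← hrows] at this
  have hcomp : HasFDerivAt Vdet
      ((0 : (Fin 3 → Fin 3 → ℝ) →L[ℝ] ℝ).comp
        (fderiv ℝ (fun K' : Fin 6 → Fin 2 → ℝ => fun r c : Fin 3 => Vmat K' r c) K)) K :=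
    hf.comp K hg.hasFDerivAt
  rw [ContinuousLinearMap.zero_comp] at hcomp
  exact hcomp.fderiv
end

section
/- If in a configuration K' of a 3-RPR manipulator one leg degenerates to a point (k'_j = k'_{j+3} for some j ∈ {1,2,3}) and the carrier lines of the remaining two legs pass through that point, then K' is a singular point of the singularity variety V = 0: V and all its first partial derivatives vanish at K'. -/
theorem Differentiable.matrix_det {𝕜 E n : Type*} [NontriviallyNormedField 𝕜]
    [NormedAddCommGroup E] [NormedSpace 𝕜 E] [Fintype n] [DecidableEq n]
    {F : E → Matrix n n 𝕜} (hF : ∀ i j, Differentiable 𝕜 fun x => F x i j) :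
    Differentiable 𝕜 fun x => (F x).det := by
  simp only [Matrix.det_apply']
  fun_prop

def pluckerCol (a d : Fin 2 → ℝ) : Fin 3 → ℝ := ![d 0, d 1, det2 a d]

def pluckerMatrix (a d : Fin 3 → Fin 2 → ℝ) : Matrix (Fin 3) (Fin 3) ℝ :=
  Matrix.of fun r c => pluckerCol (a c) (d c) r

def legBase (K : Fin 6 → Fin 2 → ℝ) : Fin 3 → Fin 2 → ℝ :=
  fun c => K (Fin.castLE (by norm_num) c)

def legDir (K : Fin 6 → Fin 2 → ℝ) : Fin 3 → Fin 2 → ℝ :=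
  fun c => K (c.addNat 3) - K (Fin.castLE (by norm_num) c)

theorem pluckerCol_smul (a d : Fin 2 → ℝ) (t : ℝ) :
    pluckerCol a (t • d) = t • pluckerCol a d := by
  ext r
  fin_cases r <;> simp [pluckerCol, det2]
  ring

theorem dotProduct_pluckerCol (p a d : Fin 2 → ℝ) :
    ![-p 1, p 0, -1] ⬝ᵥ pluckerCol a d = det2 (p - a) d := by
  simp [pluckerCol, det2, dotProduct, Fin.sum_univ_three]
  ring

theorem pluckerMatrix_update (a d : Fin 3 → Fin 2 → ℝ) (j : Fin 3) (e : Fin 2 → ℝ) :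
    pluckerMatrix a (Function.update d j e) =
      (pluckerMatrix a d).updateCol j (pluckerCol (a j) e) := by
  ext r c
  by_cases hc : c = j
  · subst hc
    simp [pluckerMatrix]
  · simp [pluckerMatrix, hc]

theorem Differentiable.pluckerMatrix_apply {E : Type*} [NormedAddCommGroup E] [NormedSpace ℝ E]
    {a d : E → Fin 3 → Fin 2 → ℝ} (ha : Differentiable ℝ a) (hd : Differentiable ℝ d)
    (r c : Fin 3) : Differentiable ℝ fun x => pluckerMatrix (a x) (d x) r c := by
  fin_cases r <;> simp [pluckerMatrix, pluckerCol, det2] <;> fun_prop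

theorem det_pluckerMatrix_eq_zero_of_concurrent {a d : Fin 3 → Fin 2 → ℝ} (j : Fin 3)
    (h : ∀ c ≠ j, det2 (a j - a c) (d c) = 0) : (pluckerMatrix a d).det = 0 := by
  refine Matrix.exists_vecMul_eq_zero_iff.mp
    ⟨![-a j 1, a j 0, -1], fun hv => by simpa using congrFun hv 2, ?_⟩
  ext c
  change ![-a j 1, a j 0, -1] ⬝ᵥ pluckerCol (a c) (d c) = 0
  rw [dotProduct_pluckerCol]
  by_cases hc : c = j
  · simp [hc, det2]
  · exact h c hc

theorem hasDerivAt_det_pluckerMatrix_of_degenerate_of_concurrent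
    {a α d δ : Fin 3 → Fin 2 → ℝ} {j : Fin 3} (hj : d j = 0)
    (hconc : ∀ c ≠ j, det2 (a j - a c) (d c) = 0) :
    HasDerivAt (fun t : ℝ => (pluckerMatrix (a + t • α) (d + t • δ)).det) 0 0 := by
  set g : ℝ → ℝ := fun t =>
    (pluckerMatrix (a + t • α) (Function.update (d + t • δ) j (δ j))).det
  have hfactor :
      (fun t : ℝ => (pluckerMatrix (a + t • α) (d + t • δ)).det) = fun t => t * g t := by
    ext t
    have hcol : d + t • δ = Function.update (d + t • δ) j (t • δ j) := by
      simp [hj]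
    rw [hcol, pluckerMatrix_update, pluckerCol_smul, Matrix.det_updateCol_smul,
      ← pluckerMatrix_update]
  have hg : Differentiable ℝ g := by
    refine Differentiable.matrix_det (Differentiable.pluckerMatrix_apply (by fun_prop) ?_)
    rw [differentiable_pi]
    intro c
    by_cases hc : c = j <;> simp [hc]
  have hg0 : g 0 = 0 := by
    refine det_pluckerMatrix_eq_zero_of_concurrent j fun c hc => ?_
    simpa [hc] using hconc c hc
  rw [hfactor]
  simpa [hg0] using (hasDerivAt_id' (0 : ℝ)).fun_mul (hg 0).hasDerivAt

theorem legBase_add_smul (K y : Fin 6 → Fin 2 → ℝ) (t : ℝ) :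
    legBase (K + t • y) = legBase K + t • legBase y := rfl

theorem legDir_add_smul (K y : Fin 6 → Fin 2 → ℝ) (t : ℝ) :
    legDir (K + t • y) = legDir K + t • legDir y := by
  ext c : 1
  simp only [legDir, Pi.add_apply, Pi.smul_apply, smul_sub]
  abel

theorem Vdet_eq_det_pluckerMatrix (K : Fin 6 → Fin 2 → ℝ) :
    Vdet K = (pluckerMatrix (legBase K) (legDir K)).det := by
  have hV : Vmat K = pluckerMatrix (legBase K) (legDir K) := by
    ext r c
    fin_cases r <;> rfl
  rw [Vdet, hV]

theorem differentiable_Vdet : Differentiable ℝ Vdet := by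
  rw [funext Vdet_eq_det_pluckerMatrix]
  exact Differentiable.matrix_det
    (Differentiable.pluckerMatrix_apply (by unfold legBase; fun_prop) (by unfold legDir; fun_prop))

/-- If one leg degenerates to a point and the carrier lines of the remaining two legs pass
through that point, then the configuration is a singular point of `V = 0`. -/
theorem degenerate_leg_concurrent_singular_point (K : Fin 6 → Fin 2 → ℝ)
    (h : ∃ j : Fin 3, K (Fin.castLE (by norm_num) j) = K (j.addNat 3) ∧
      ∀ i : Fin 3, i ≠ j →
        det2 (K (Fin.castLE (by norm_num) j) - K (Fin.castLE (by norm_num) i))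
          (K (i.addNat 3) - K (Fin.castLE (by norm_num) i)) = 0) :
    Vdet K = 0 ∧ fderiv ℝ Vdet K = 0 := by
  obtain ⟨j, hdegen, hconc⟩ := h
  have hj : legDir K j = 0 := sub_eq_zero.mpr hdegen.symm
  refine ⟨?_, ?_⟩
  · rw [Vdet_eq_det_pluckerMatrix]
    exact det_pluckerMatrix_eq_zero_of_concurrent j hconc
  · ext y
    rw [← (differentiable_Vdet K).lineDeriv_eq_fderiv, zero_apply]
    refine HasLineDerivAt.lineDeriv ?_
    simpa only [HasLineDerivAt, Vdet_eq_det_pluckerMatrix, legBase_add_smul, legDir_add_smul]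
      using hasDerivAt_det_pluckerMatrix_of_degenerate_of_concurrent hj hconc
end

section
/- Given three points k₄, k₅, k₆ ∈ ℝ², the points k'₄, k'₅, k'₆ minimizing (1/3)Σ_{i=4}^{6} ‖k'_i − k_i‖² subject to the constraint that k'₄, k'₅, k'₆ are collinear are the orthogonal projections (pedal points) of k₄, k₅, k₆ onto their line of total least-squares regression. -/
open scoped RealInnerProductSpace

private lemma pedal_key (p v x : EuclideanSpace ℝ (Fin 2)) (hv : ‖v‖ = 1) (t : ℝ) :
    ‖x - (p + t • v)‖^2 = ‖x - (p + ⟪x - p, v⟫ • v)‖^2 + (t - ⟪x - p, v⟫)^2 := by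
  have h1 : x - (p + t • v) = (x - p) - t • v := by abel
  have h2 : x - (p + ⟪x - p, v⟫ • v) = (x - p) - ⟪x - p, v⟫ • v := by abel
  rw [h1, h2]
  set w := x - p with hw
  have e : ∀ s : ℝ, ‖w - s • v‖^2 = ‖w‖^2 - 2*s*⟪w,v⟫ + s^2 := by
    intro s
    rw [norm_sub_sq_real, real_inner_smul_right, norm_smul, hv, Real.norm_eq_abs]
    rw [mul_one, sq_abs]
    ring
  rw [e t, e ⟪w,v⟫]; ring

/-- The minimizers of the mean squared displacement subject to collinearity are the pedal
points of the given points on their line of total least-squares regression: there is a line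
minimizing the sum of squared orthogonal distances such that each `k' i` is the orthogonal
projection of `k i` onto it. -/
theorem collinear_minimizer_is_pedal_on_regression_line
    (k k' : Fin 3 → EuclideanSpace ℝ (Fin 2))
    (hcol : Collinear ℝ (Set.range k'))
    (hmin : ∀ q : Fin 3 → EuclideanSpace ℝ (Fin 2), Collinear ℝ (Set.range q) →
      (1/3) * ∑ i, ‖k' i - k i‖^2 ≤ (1/3) * ∑ i, ‖q i - k i‖^2) :
    ∃ p v : EuclideanSpace ℝ (Fin 2), ‖v‖ = 1 ∧
      (∀ p' v' : EuclideanSpace ℝ (Fin 2), ‖v'‖ = 1 →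
        ∑ i, ‖k i - (p + ⟪k i - p, v⟫ • v)‖^2 ≤
          ∑ i, ‖k i - (p' + ⟪k i - p', v'⟫ • v')‖^2) ∧
      ∀ i, k' i = p + ⟪k i - p, v⟫ • v := by
  -- extract a line through the k' points with unit direction
  obtain ⟨p₀, u, hu⟩ := (collinear_iff_exists_forall_eq_smul_vadd _).1 hcol
  obtain ⟨p, v, hv, hline⟩ :
      ∃ p v : EuclideanSpace ℝ (Fin 2), ‖v‖ = 1 ∧ ∀ i, ∃ t : ℝ, k' i = p + t • v := by
    by_cases hu0 : u = 0
    · refine ⟨p₀, EuclideanSpace.single 0 1, ?_, ?_⟩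
      · simp [EuclideanSpace.norm_single]
      · intro i
        obtain ⟨r, hr⟩ := hu (k' i) (Set.mem_range_self i)
        exact ⟨0, by simpa [hu0] using hr⟩
    · refine ⟨p₀, ‖u‖⁻¹ • u, ?_, ?_⟩
      · rw [norm_smul, norm_inv, norm_norm]
        field_simp [norm_ne_zero_iff.2 hu0]
      · intro i
        obtain ⟨r, hr⟩ := hu (k' i) (Set.mem_range_self i)
        refine ⟨r * ‖u‖, ?_⟩
        rw [hr, vadd_eq_add, smul_smul, add_comm]
        rw [mul_assoc, mul_inv_cancel₀ (norm_ne_zero_iff.2 hu0), mul_one]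
  -- the projections onto this line
  set q : Fin 3 → EuclideanSpace ℝ (Fin 2) := fun i => p + ⟪k i - p, v⟫ • v with hq
  have hqcol : Collinear ℝ (Set.range q) := by
    rw [collinear_iff_exists_forall_eq_smul_vadd]
    refine ⟨p, v, ?_⟩
    rintro x ⟨i, rfl⟩
    exact ⟨⟪k i - p, v⟫, by simp [hq, add_comm]⟩
  -- sums: k' is at least as good as q, but q is pointwise at least as good as k'
  have hsum : ∑ i, ‖k' i - k i‖^2 ≤ ∑ i, ‖q i - k i‖^2 := by
    have := hmin q hqcol; linarith
  choose t ht using hline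
  have hterm : ∀ i, ‖q i - k i‖^2 + (t i - ⟪k i - p, v⟫)^2 = ‖k' i - k i‖^2 := by
    intro i
    have h1 := pedal_key p v (k i) hv (t i)
    rw [norm_sub_rev (q i), norm_sub_rev (k' i), ht i]
    rw [h1, hq]
  have hzero : ∀ i, t i = ⟪k i - p, v⟫ := by
    have hs : ∑ i, (t i - ⟪k i - p, v⟫)^2 ≤ 0 := by
      have e1 : ∑ i, ‖k' i - k i‖^2
          = ∑ i, ‖q i - k i‖^2 + ∑ i, (t i - ⟪k i - p, v⟫)^2 := by
        rw [← Finset.sum_add_distrib]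
        exact (Finset.sum_congr rfl fun i _ => (hterm i).symm)
      linarith
    intro i
    have h := (Finset.sum_eq_zero_iff_of_nonneg
      (fun i _ => sq_nonneg (t i - ⟪k i - p, v⟫))).1
      (le_antisymm hs (Finset.sum_nonneg fun i _ => sq_nonneg _)) i (Finset.mem_univ i)
    nlinarith [h]
  have hkq : ∀ i, k' i = q i := by
    intro i; rw [ht i, hzero i]
  refine ⟨p, v, hv, ?_, hkq⟩
  intro p' v' hv'
  set q' : Fin 3 → EuclideanSpace ℝ (Fin 2) := fun i => p' + ⟪k i - p', v'⟫ • v' with hq'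
  have hq'col : Collinear ℝ (Set.range q') := by
    rw [collinear_iff_exists_forall_eq_smul_vadd]
    refine ⟨p', v', ?_⟩
    rintro x ⟨i, rfl⟩
    exact ⟨⟪k i - p', v'⟫, by simp [hq', add_comm]⟩
  have h2 := hmin q' hq'col
  have e1 : ∑ i, ‖k i - (p + ⟪k i - p, v⟫ • v)‖^2 = ∑ i, ‖k' i - k i‖^2 :=
    Finset.sum_congr rfl fun i _ => by rw [hkq i, norm_sub_rev, hq]
  have e2 : ∑ i, ‖k i - (p' + ⟪k i - p', v'⟫ • v')‖^2 = ∑ i, ‖q' i - k i‖^2 :=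
    Finset.sum_congr rfl fun i _ => by rw [norm_sub_rev, hq']
  rw [e1, e2]; linarith
end
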